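/- Let A ∈ ℝ^{m×n} with k + 1 ≤ min(m,n) be partitioned in blocks A = [[A11, A12],[A21, A22]] with A11 ∈ ℝ^{k×k} invertible, and let S(A11) = A22 − A21·A11⁻¹·A12. Suppose that for some μ, ν ≥ 1: (1) σ_k(A) ≤ μ·σ_k(A11); (2) ‖S(A11)‖₂ ≤ μ·σ_{k+1}(A); and (3) ‖A21A11⁻¹‖_max ≤ ν and ‖A11⁻¹A12‖_max ≤ ν. Then A11 is a near-local maximum volume k×k submatrix of A with parameter γ ≤ ν² + μ²: for every k×k submatrix Â11 of A that differs from A11 in at most one row and at most one column, vol(Â11) ≤ (ν² + μ²)·vol(A11). -/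

import Mathlib

open Matrix

/-- The spectral norm (`‖·‖₂`, largest singular value) of a real matrix. -/
noncomputable def specNorm {m n : Type*} [Fintype m] [Fintype n] [DecidableEq n]
    (A : Matrix m n ℝ) : ℝ :=
  ‖LinearMap.toContinuousLinearMap (Matrix.toEuclideanLin A)‖

/-- `sval A j` is the `j`-th largest singular value of `A` (1-indexed), characterized as the
distance, in the spectral norm, from `A` to the set of matrices of rank `< j`. -/
noncomputable def sval {m n : Type*} [Fintype m] [Fintype n] [DecidableEq n]
    (A : Matrix m n ℝ) (j : ℕ) : ℝ :=
  sInf {x : ℝ | ∃ B : Matrix m n ℝ, B.rank < j ∧ x = specNorm (A - B)}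

/-- The volume of a matrix: the product of its singular values. -/
noncomputable def vol {m n : Type*} [Fintype m] [Fintype n] [DecidableEq n]
    (A : Matrix m n ℝ) : ℝ :=
  ∏ j ∈ Finset.Icc 1 (min (Fintype.card m) (Fintype.card n)), sval A j

/-- `DiffOne b r` : `r` is an injective selection of indices whose image (index set)
differs from the index set selected by `b` in at most one element. -/
def DiffOne {ι α : Type*} [Fintype ι] [DecidableEq α] (b r : ι → α) : Prop :=
  Function.Injective r ∧ (Finset.univ.image r \ Finset.univ.image b).card ≤ 1

/-!
Eckart–Young: the distance from `A` to the matrices of rank `< j` is the `j`-th singular value of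
`A` in the sense of the spectral theorem for `Aᴴ A`, so the volume of a square matrix is `|det|`.

Let `L = A[:, J] A₁₁⁻¹`, `R = A₁₁⁻¹ A[I, :]` and `S = A - L A[I, :]`, the Schur complement of `A₁₁`
padded by zeros. Replacing row `i` of `A₁₁` by row `p` of `A` and column `j` by column `q`
multiplies the determinant by `L p i * R j q + A₁₁⁻¹ j i * S p q`. The first term is at most `ν²`
by (3); by (2) and (1), `|S p q| ≤ ‖S‖₂ ≤ μ σ_{k+1}(A) ≤ μ σ_k(A) ≤ μ² σ_k(A₁₁)`, while
`|A₁₁⁻¹ j i| ≤ 1 / σ_k(A₁₁)`, so the second term is at most `μ²`.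
-/

open Module InnerProductSpace

namespace LinearMap

variable {𝕜 : Type*} [RCLike 𝕜]
  {E : Type*} [NormedAddCommGroup E] [InnerProductSpace 𝕜 E] [FiniteDimensional 𝕜 E]
  {F : Type*} [NormedAddCommGroup F] [InnerProductSpace 𝕜 F] [FiniteDimensional 𝕜 F]
  (T : E →ₗ[𝕜] F)

noncomputable abbrev rightSingularVectors :
    OrthonormalBasis (Fin (finrank 𝕜 E)) 𝕜 E :=
  T.isSymmetric_adjoint_comp_self.eigenvectorBasis rfl

theorem norm_apply_sq_eq_sum (x : E) :
    ‖T x‖ ^ 2 =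
      ∑ i : Fin (finrank 𝕜 E), T.singularValues i ^ 2 * ‖⟪T.rightSingularVectors i, x⟫_𝕜‖ ^ 2 := by
  have hT := T.isSymmetric_adjoint_comp_self
  rw [← RCLike.ofReal_inj (K := 𝕜), RCLike.ofReal_pow, ← inner_self_eq_norm_sq_to_K,
    ← adjoint_inner_right, ← comp_apply, ← T.rightSingularVectors.sum_inner_mul_inner,
    RCLike.ofReal_sum]
  refine Finset.sum_congr rfl fun i _ => ?_
  rw [← hT, hT.apply_eigenvectorBasis, inner_smul_left, sq_singularValues_fin T rfl,
    RCLike.conj_ofReal, ← inner_conj_symm x, mul_left_comm, RCLike.conj_mul]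
  push_cast
  ring

theorem singularValues_mul_norm_le_norm_apply {i : Fin (finrank 𝕜 E)} {x : E}
    (hx : ∀ j, i < j → ⟪T.rightSingularVectors j, x⟫_𝕜 = 0) :
    T.singularValues i * ‖x‖ ≤ ‖T x‖ := by
  refine (pow_le_pow_iff_left₀ (mul_nonneg (T.singularValues_nonneg _) (norm_nonneg _))
    (norm_nonneg _) two_ne_zero).mp ?_
  rw [mul_pow, norm_apply_sq_eq_sum, ← T.rightSingularVectors.sum_sq_norm_inner_right x,
    Finset.mul_sum]
  refine Finset.sum_le_sum fun j _ => ?_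
  rcases lt_or_ge i j with hij | hji
  · simp [hx j hij]
  · gcongr
    · exact T.singularValues_nonneg _
    · exact T.singularValues_antitone (by simpa using hji)

theorem norm_apply_le_singularValues_mul_norm {i : Fin (finrank 𝕜 E)} {x : E}
    (hx : ∀ j < i, ⟪T.rightSingularVectors j, x⟫_𝕜 = 0) :
    ‖T x‖ ≤ T.singularValues i * ‖x‖ := by
  refine (pow_le_pow_iff_left₀ (norm_nonneg _)
    (mul_nonneg (T.singularValues_nonneg _) (norm_nonneg _)) two_ne_zero).mp ?_
  rw [mul_pow, norm_apply_sq_eq_sum, ← T.rightSingularVectors.sum_sq_norm_inner_right x,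
    Finset.mul_sum]
  refine Finset.sum_le_sum fun j _ => ?_
  rcases lt_or_ge j i with hji | hij
  · simp [hx j hji]
  · gcongr
    · exact T.singularValues_nonneg _
    · exact T.singularValues_antitone (by simpa using hij)

theorem singularValues_le_opNorm_sub {i : ℕ} (B : E →ₗ[𝕜] F) (hB : finrank 𝕜 (range B) ≤ i) :
    T.singularValues i ≤ ‖(T - B).toContinuousLinearMap‖ := by
  rcases le_or_gt (finrank 𝕜 E) i with hi | hi
  · rw [T.singularValues_of_finrank_le hi]
    exact norm_nonneg _
  set i' : Fin (finrank 𝕜 E) := ⟨i, hi⟩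
  set U := Submodule.span 𝕜 (Set.range fun j : Finset.Iic i' => T.rightSingularVectors j)
  have hU : finrank 𝕜 U = i + 1 := by
    refine (finrank_span_eq_card
      (T.rightSingularVectors.orthonormal.linearIndependent.comp _ Subtype.val_injective)).trans ?_
    rw [Fintype.card_coe, Fin.card_Iic]
  -- `dim U + dim (ker B) > dim E`
  have hUB : ¬ Disjoint U (ker B) := fun h => by
    have := Submodule.finrank_add_finrank_le_of_disjoint h
    have := B.finrank_range_add_finrank_ker
    omega
  obtain ⟨x, hxU, hxB, hx⟩ : ∃ x ∈ U, x ∈ ker B ∧ x ≠ 0 := by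
    simpa [Submodule.disjoint_def] using hUB
  have horth : ∀ j, i' < j → ⟪T.rightSingularVectors j, x⟫_𝕜 = 0 := fun j hj => by
    refine Submodule.mem_orthogonal_singleton_iff_inner_right.mp
      (Submodule.span_le.mpr ?_ hxU)
    rintro _ ⟨l, rfl⟩
    refine Submodule.mem_orthogonal_singleton_iff_inner_right.mpr
      (T.rightSingularVectors.orthonormal.inner_eq_zero ?_)
    exact (lt_of_le_of_lt (Finset.mem_Iic.mp l.2) hj).ne'
  have hTx : T x = (T - B) x := by simp [mem_ker.mp hxB]
  refine le_of_mul_le_mul_right ?_ (norm_pos_iff.mpr hx)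
  calc T.singularValues i * ‖x‖ ≤ ‖T x‖ := T.singularValues_mul_norm_le_norm_apply horth
    _ = ‖(T - B).toContinuousLinearMap x‖ := by rw [hTx]; rfl
    _ ≤ _ := ContinuousLinearMap.le_opNorm _ _

theorem exists_finrank_range_le_opNorm_sub_le (i : ℕ) :
    ∃ B : E →ₗ[𝕜] F, finrank 𝕜 (range B) ≤ i ∧
      ‖(T - B).toContinuousLinearMap‖ ≤ T.singularValues i := by
  rcases le_or_gt (finrank 𝕜 E) i with hi | hi
  · refine ⟨T, T.finrank_range_le.trans hi, ?_⟩
    simpa using T.singularValues_nonneg i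
  set i' : Fin (finrank 𝕜 E) := ⟨i, hi⟩
  set V := Submodule.span 𝕜 (Set.range fun j : Finset.Iio i' => T.rightSingularVectors j)
  set P : E →ₗ[𝕜] E := V.starProjection.toLinearMap
  refine ⟨T ∘ₗ P, ?_, ?_⟩
  · calc finrank 𝕜 (range (T ∘ₗ P)) ≤ finrank 𝕜 V := by
          rw [range_comp, V.range_starProjection]
          exact Submodule.finrank_map_le T V
      _ ≤ Fintype.card (Finset.Iio i') := finrank_range_le_card _
      _ = i := by rw [Fintype.card_coe, Fin.card_Iio]
  · refine ContinuousLinearMap.opNorm_le_bound _ (T.singularValues_nonneg i) fun x => ?_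
    have horth : ∀ j < i', ⟪T.rightSingularVectors j, x - P x⟫_𝕜 = 0 := fun j hj =>
      Submodule.inner_right_of_mem_orthogonal
        (Submodule.subset_span (Set.mem_range_self
          (⟨j, Finset.mem_Iio.mpr hj⟩ : Finset.Iio i')))
        (V.sub_starProjection_mem_orthogonal x)
    calc ‖(T - T ∘ₗ P) x‖ = ‖T (x - P x)‖ := by simp
      _ ≤ T.singularValues i * ‖x - P x‖ := T.norm_apply_le_singularValues_mul_norm horth
      _ ≤ T.singularValues i * ‖x‖ := by
        gcongr
        · exact T.singularValues_nonneg i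
        · simpa [P] using Vᗮ.norm_starProjection_apply_le x

end LinearMap

section SingularValues

variable {m n : Type*} [Fintype m] [Fintype n] [DecidableEq n]

theorem Matrix.rank_eq_finrank_range_toEuclideanLin (B : Matrix m n ℝ) :
    B.rank = finrank ℝ (LinearMap.range (toEuclideanLin B)) := by
  rw [toEuclideanLin_eq_toLin_orthonormal]
  exact B.rank_eq_finrank_range_toLin _ _

theorem Matrix.abs_apply_le_norm_toEuclideanLin_single (A : Matrix m n ℝ) (i : m) (j : n) :
    |A i j| ≤ ‖toEuclideanLin A (EuclideanSpace.single j 1)‖ := by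
  simpa [toLpLin_apply] using PiLp.norm_apply_le (toEuclideanLin A (EuclideanSpace.single j 1)) i

theorem abs_apply_le_specNorm (A : Matrix m n ℝ) (i : m) (j : n) : |A i j| ≤ specNorm A :=
  (A.abs_apply_le_norm_toEuclideanLin_single i j).trans <| by
    simpa [specNorm] using (LinearMap.toContinuousLinearMap (toEuclideanLin A)).le_opNorm
      (EuclideanSpace.single j 1)

theorem sval_nonneg (A : Matrix m n ℝ) (j : ℕ) : 0 ≤ sval A j :=
  Real.sInf_nonneg (by rintro _ ⟨B, -, rfl⟩; exact norm_nonneg _)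

theorem sval_le_specNorm_sub (A B : Matrix m n ℝ) {j : ℕ} (hB : B.rank < j) :
    sval A j ≤ specNorm (A - B) :=
  csInf_le ⟨0, by rintro _ ⟨B, -, rfl⟩; exact norm_nonneg _⟩ ⟨B, hB, rfl⟩

theorem le_sval (A : Matrix m n ℝ) {j : ℕ} (hj : 0 < j) {c : ℝ}
    (h : ∀ B : Matrix m n ℝ, B.rank < j → c ≤ specNorm (A - B)) : c ≤ sval A j :=
  le_csInf ⟨specNorm (A - 0), 0, by simpa using hj, rfl⟩ (by rintro _ ⟨B, hB, rfl⟩; exact h B hB)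

theorem sval_succ_eq_singularValues (A : Matrix m n ℝ) (j : ℕ) :
    sval A (j + 1) = (toEuclideanLin A).singularValues j := by
  refine le_antisymm ?_ (le_sval A j.succ_pos fun B hB => ?_)
  · obtain ⟨B, hB, hAB⟩ := (toEuclideanLin A).exists_finrank_range_le_opNorm_sub_le j
    refine (sval_le_specNorm_sub A (toEuclideanLin.symm B) ?_).trans ?_
    · rw [Matrix.rank_eq_finrank_range_toEuclideanLin, LinearEquiv.apply_symm_apply]
      exact Nat.lt_succ_of_le hB
    · simpa [specNorm] using hAB
  · rw [Matrix.rank_eq_finrank_range_toEuclideanLin] at hB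
    simpa [specNorm] using
      (toEuclideanLin A).singularValues_le_opNorm_sub _ (Nat.le_of_lt_succ hB)

theorem sval_succ_le (A : Matrix m n ℝ) {j : ℕ} (hj : 0 < j) : sval A (j + 1) ≤ sval A j := by
  obtain ⟨j, rfl⟩ := Nat.exists_eq_add_of_lt hj
  rw [zero_add, sval_succ_eq_singularValues, sval_succ_eq_singularValues]
  exact (toEuclideanLin A).singularValues_antitone j.le_succ

theorem sval_card_mul_norm_le [Nonempty n] (A : Matrix m n ℝ) (x : EuclideanSpace ℝ n) :
    sval A (Fintype.card n) * ‖x‖ ≤ ‖toEuclideanLin A x‖ := by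
  obtain ⟨d, hd⟩ := Nat.exists_eq_succ_of_ne_zero (Fintype.card_ne_zero (α := n))
  have hd' : d < finrank ℝ (EuclideanSpace ℝ n) := by simp [hd]
  rw [hd, sval_succ_eq_singularValues]
  refine (toEuclideanLin A).singularValues_mul_norm_le_norm_apply (i := ⟨d, hd'⟩) fun j hj => ?_
  have hj' := j.isLt
  simp only [finrank_euclideanSpace, Fin.lt_def] at hj hj'
  omega

theorem sval_card_mul_abs_inv_apply_le_one (A : Matrix n n ℝ) (hA : IsUnit A.det) (i j : n) :
    sval A (Fintype.card n) * |A⁻¹ i j| ≤ 1 := by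
  have : Nonempty n := ⟨i⟩
  calc sval A (Fintype.card n) * |A⁻¹ i j|
      ≤ sval A (Fintype.card n) * ‖toEuclideanLin A⁻¹ (EuclideanSpace.single j 1)‖ :=
        mul_le_mul_of_nonneg_left (A⁻¹.abs_apply_le_norm_toEuclideanLin_single i j)
          (sval_nonneg _ _)
    _ ≤ ‖toEuclideanLin A (toEuclideanLin A⁻¹ (EuclideanSpace.single j 1))‖ :=
        sval_card_mul_norm_le A _
    _ = 1 := by simp [-mulVec_single, toLpLin_apply, mulVec_mulVec, mul_nonsing_inv A hA]

theorem vol_eq_abs_det (A : Matrix n n ℝ) : vol A = |A.det| := by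
  have hprod : vol A = ∏ j ∈ Finset.range (Fintype.card n), sval A (j + 1) := by
    rw [vol, min_self, Finset.range_eq_Ico, Finset.prod_Ico_add' (fun j => sval A j),
      zero_add, Finset.Ico_add_one_right_eq_Icc]
  simp_rw [hprod, sval_succ_eq_singularValues]
  rw [← finrank_euclideanSpace (𝕜 := ℝ), ← LinearMap.normDet_eq_prod_singularValues,
    LinearMap.normDet_eq_abs_det, toEuclideanLin_eq_toLin_orthonormal, LinearMap.det_toLin]

end SingularValues

namespace Matrix

variable {R : Type*} [CommRing R] {n : Type*} [Fintype n] [DecidableEq n]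

theorem det_updateRow_single_updateCol (M : Matrix n n R) (i j : n) (w : n → R) :
    ((M.updateCol j w).updateRow i (Pi.single j 1)).det =
      (M.updateRow i (Pi.single j 1)).det := by
  suffices key : ∀ v : n → R, ((M.updateCol j v).updateRow i (Pi.single j 1)).det =
      ((M.updateCol j 0).updateRow i (Pi.single j 1)).det by
    rw [key, ← key (fun x => M x j), updateCol_eq_self]
  intro v
  set N := (M.updateCol j 0).updateRow i (Pi.single j 1)
  have hsplit : (M.updateCol j v).updateRow i (Pi.single j 1) =
      N.updateCol j (Pi.single i 1 + Function.update v i 0) := by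
    ext x y
    simp only [N, updateRow_apply, updateCol_apply, Pi.single_apply, Pi.add_apply,
      Function.update_apply]
    split_ifs <;> simp_all
  have hN : N.updateCol j (Pi.single i 1) = N := by
    ext x y
    simp only [N, updateRow_apply, updateCol_apply, Pi.single_apply]
    split_ifs <;> simp_all
  -- the second summand has a zero row `i`
  rw [hsplit, det_updateCol_add, hN, add_eq_left]
  refine det_eq_zero_of_row_eq_zero i fun y => ?_
  simp only [N, updateRow_apply, updateCol_apply, Pi.single_apply, Function.update_apply]
  split_ifs <;> simp_all

theorem adjugate_eq_det_smul_inv (A : Matrix n n R) (hA : IsUnit A.det) :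
    A.adjugate = A.det • A⁻¹ := by
  rw [nonsing_inv_apply A hA, smul_smul, IsUnit.mul_val_inv, one_smul]

theorem det_updateRow_updateCol (A : Matrix n n R) (hA : IsUnit A.det) (i j : n) (u w : n → R)
    (c : R) :
    ((A.updateCol j w).updateRow i (Function.update u j c)).det =
      A.det * ((u ᵥ* A⁻¹) i * (A⁻¹ *ᵥ w) j + A⁻¹ j i * (c - u ⬝ᵥ A⁻¹ *ᵥ w)) := by
  set a := u ᵥ* A⁻¹
  set b := A⁻¹ *ᵥ w
  have hAb : A *ᵥ b = w := by simp [b, mulVec_mulVec, mul_nonsing_inv A hA]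
  have hua : a ᵥ* A = u := by simp [a, vecMul_vecMul, nonsing_inv_mul A hA]
  have hcol : (A.updateCol j w).det = b j * A.det := by
    rw [← smul_eq_mul]
    convert det_updateCol_sum A j b using 3
    ext x
    simp [← hAb, mulVec, dotProduct, mul_comm]
  -- the new row `i` is `a` times the rows of `A.updateCol j w`, corrected at the corner
  have hrow : Function.update u j c =
      ∑ x, a x • (A.updateCol j w) x + (c - u ⬝ᵥ b) • Pi.single j 1 := by
    ext y
    by_cases hy : y = j
    · have hdot : a ⬝ᵥ w = u ⬝ᵥ b := by rw [← hAb, dotProduct_mulVec, hua]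
      subst hy
      simp only [dotProduct] at hdot
      simp [hdot, dotProduct]
    · simp [hy, ← hua, vecMul, dotProduct]
  rw [hrow, det_updateRow_add, det_updateRow_sum, det_updateRow_smul, hcol,
    det_updateRow_single_updateCol, ← adjugate_apply, adjugate_eq_det_smul_inv A hA]
  simp only [smul_eq_mul, smul_apply]
  ring

theorem det_submatrix_update_update {m n k : Type*} [Fintype k] [DecidableEq k]
    (M : Matrix m n R) (I : k → m) (J : k → n) (hA : IsUnit (M.submatrix I J).det)
    (i j : k) (p : m) (q : n) :
    (M.submatrix (Function.update I i p) (Function.update J j q)).det =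
      (M.submatrix I J).det *
        ((M.submatrix id J * (M.submatrix I J)⁻¹) p i *
            ((M.submatrix I J)⁻¹ * M.submatrix I id) j q +
          (M.submatrix I J)⁻¹ j i *
            (M - M.submatrix id J * (M.submatrix I J)⁻¹ * M.submatrix I id) p q) := by
  have hsub : M.submatrix (Function.update I i p) (Function.update J j q) =
      ((M.submatrix I J).updateCol j (fun x => M (I x) q)).updateRow i
        (Function.update (fun y => M p (J y)) j (M p q)) := by
    ext x y
    simp only [submatrix_apply, updateRow_apply, updateCol_apply, Function.update_apply]
    split_ifs <;> simp_all
  rw [hsub, det_updateRow_updateCol _ hA]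
  simp [mul_apply, vecMul, mulVec, dotProduct, Matrix.mul_assoc, Finset.mul_sum]

theorem det_fromBlocks_submatrix_update_update {k m n : Type*} [Fintype k] [DecidableEq k]
    (A₁₁ : Matrix k k R) (A₁₂ : Matrix k n R) (A₂₁ : Matrix m k R) (A₂₂ : Matrix m n R)
    (hA : IsUnit A₁₁.det) (i j : k) (p : k ⊕ m) (q : k ⊕ n) :
    ((fromBlocks A₁₁ A₁₂ A₂₁ A₂₂).submatrix (Function.update Sum.inl i p)
        (Function.update Sum.inl j q)).det =
      A₁₁.det * (fromRows 1 (A₂₁ * A₁₁⁻¹) p i * fromCols 1 (A₁₁⁻¹ * A₁₂) j q +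
        A₁₁⁻¹ j i * fromBlocks 0 0 0 (A₂₂ - A₂₁ * A₁₁⁻¹ * A₁₂) p q) := by
  have h₁₁ : (fromBlocks A₁₁ A₁₂ A₂₁ A₂₂).submatrix Sum.inl Sum.inl = A₁₁ := by ext; simp
  have hcols : (fromBlocks A₁₁ A₁₂ A₂₁ A₂₂).submatrix id Sum.inl = fromRows A₁₁ A₂₁ := by
    ext (x | x) y <;> simp
  have hrows : (fromBlocks A₁₁ A₁₂ A₂₁ A₂₂).submatrix Sum.inl id = fromCols A₁₁ A₁₂ := by
    ext x (y | y) <;> simp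
  have hres : fromBlocks A₁₁ A₁₂ A₂₁ A₂₂ - fromRows 1 (A₂₁ * A₁₁⁻¹) * fromCols A₁₁ A₁₂ =
      fromBlocks 0 0 0 (A₂₂ - A₂₁ * A₁₁⁻¹ * A₁₂) := by
    rw [fromRows_mul_fromCols, Matrix.mul_assoc, nonsing_inv_mul _ hA, Matrix.mul_one]
    ext (x | x) (y | y) <;> simp
  rw [det_submatrix_update_update _ _ _ (h₁₁ ▸ hA), h₁₁, hcols, hrows, fromRows_mul,
    mul_fromCols, mul_nonsing_inv _ hA, nonsing_inv_mul _ hA, hres]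

end Matrix

namespace DiffOne

variable {ι α : Type*} [Fintype ι] [DecidableEq ι] [DecidableEq α] [Nonempty ι] {b r : ι → α}

theorem exists_update_injective_image_subset (hb : Function.Injective b) (hr : DiffOne b r) :
    ∃ (i : ι) (p : α), Function.Injective (Function.update b i p) ∧
      Finset.univ.image r ⊆ Finset.univ.image (Function.update b i p) := by
  obtain ⟨hr_inj, hcard⟩ := hr
  by_cases hsub : Finset.univ.image r ⊆ Finset.univ.image b
  · obtain ⟨i⟩ := ‹Nonempty ι›
    exact ⟨i, b i, by simpa using hb, by simpa using hsub⟩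
  obtain ⟨p, hpr, hpb⟩ := Finset.not_subset.mp hsub
  have hpdiff : p ∈ Finset.univ.image r \ Finset.univ.image b := Finset.mem_sdiff.mpr ⟨hpr, hpb⟩
  obtain ⟨i, hi⟩ : ∃ i, b i ∉ Finset.univ.image r := by
    by_contra! h
    have hbr : Finset.univ.image b ⊆ Finset.univ.image r := by
      rintro _ hx
      obtain ⟨x, -, rfl⟩ := Finset.mem_image.mp hx
      exact h x
    refine hpb (Finset.eq_of_subset_of_card_le hbr ?_ ▸ hpr)
    rw [Finset.card_image_of_injective _ hr_inj, Finset.card_image_of_injective _ hb]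
  refine ⟨i, p, fun x y hxy => ?_, fun s hs => ?_⟩
  · by_cases hx : x = i <;> by_cases hy : y = i
    · rw [hx, hy]
    · simp only [hx, Function.update_self, Function.update_of_ne hy] at hxy
      exact absurd (hxy ▸ Finset.mem_image_of_mem b (Finset.mem_univ y)) hpb
    · simp only [hy, Function.update_self, Function.update_of_ne hx] at hxy
      exact absurd (hxy ▸ Finset.mem_image_of_mem b (Finset.mem_univ x)) hpb
    · exact hb (by simpa [Function.update_of_ne hx, Function.update_of_ne hy] using hxy)
  · by_cases hsp : s = p
    · exact Finset.mem_image.mpr ⟨i, Finset.mem_univ _, by simp [hsp]⟩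
    have hsb : s ∈ Finset.univ.image b := by
      by_contra hsb
      exact hsp (Finset.card_le_one.mp hcard s (Finset.mem_sdiff.mpr ⟨hs, hsb⟩) p hpdiff)
    obtain ⟨x, -, rfl⟩ := Finset.mem_image.mp hsb
    have hxi : x ≠ i := by rintro rfl; exact hi hs
    exact Finset.mem_image.mpr ⟨x, Finset.mem_univ _, Function.update_of_ne hxi _ _⟩

theorem exists_eq_update_comp_perm (hb : Function.Injective b) (hr : DiffOne b r) :
    ∃ (i : ι) (p : α) (σ : Equiv.Perm ι), r = Function.update b i p ∘ σ := by
  obtain ⟨i, p, -, himage⟩ := hr.exists_update_injective_image_subset hb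
  choose σ hσ using fun x =>
    Finset.mem_image.mp (himage (Finset.mem_image_of_mem r (Finset.mem_univ x)))
  have hσ_inj : Function.Injective σ := fun x y hxy =>
    hr.1 <| by rw [← (hσ x).2, ← (hσ y).2, hxy]
  exact ⟨i, p, Equiv.ofBijective σ hσ_inj.bijective_of_finite, funext fun x => (hσ x).2.symm⟩

end DiffOne

theorem abs_det_fromBlocks_submatrix_update_le {κ m n : Type*} [Fintype κ] [DecidableEq κ]
    [Fintype m] [Fintype n] [DecidableEq n] (A₁₁ : Matrix κ κ ℝ) (A₁₂ : Matrix κ n ℝ)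
    (A₂₁ : Matrix m κ ℝ) (A₂₂ : Matrix m n ℝ) (hA : IsUnit A₁₁.det) {μ ν : ℝ} (hμ : 0 ≤ μ)
    (hν : 1 ≤ ν)
    (h1 : sval (fromBlocks A₁₁ A₁₂ A₂₁ A₂₂) (Fintype.card κ) ≤ μ * sval A₁₁ (Fintype.card κ))
    (h2 : specNorm (A₂₂ - A₂₁ * A₁₁⁻¹ * A₁₂) ≤
      μ * sval (fromBlocks A₁₁ A₁₂ A₂₁ A₂₂) (Fintype.card κ + 1))
    (h3a : ∀ i j, |(A₂₁ * A₁₁⁻¹) i j| ≤ ν) (h3b : ∀ i j, |(A₁₁⁻¹ * A₁₂) i j| ≤ ν)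
    (i j : κ) (p : κ ⊕ m) (q : κ ⊕ n) :
    |((fromBlocks A₁₁ A₁₂ A₂₁ A₂₂).submatrix (Function.update Sum.inl i p)
        (Function.update Sum.inl j q)).det| ≤ (ν ^ 2 + μ ^ 2) * |A₁₁.det| := by
  have hκ : 0 < Fintype.card κ := Fintype.card_pos_iff.mpr ⟨i⟩
  have hrow : |fromRows 1 (A₂₁ * A₁₁⁻¹) p i| ≤ ν := by
    rcases p with x | x
    · by_cases hx : x = i <;> simp [one_apply, hx, hν, zero_le_one.trans hν]
    · simpa using h3a x i
  have hcol : |fromCols 1 (A₁₁⁻¹ * A₁₂) j q| ≤ ν := by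
    rcases q with y | y
    · by_cases hy : j = y <;> simp [one_apply, hy, hν, zero_le_one.trans hν]
    · simpa using h3b j y
  have hschur : |A₁₁⁻¹ j i * fromBlocks 0 0 0 (A₂₂ - A₂₁ * A₁₁⁻¹ * A₁₂) p q| ≤ μ ^ 2 := by
    rcases p with x | x <;> rcases q with y | y <;> simp only [fromBlocks_apply₁₁,
      fromBlocks_apply₁₂, fromBlocks_apply₂₁, fromBlocks_apply₂₂, Matrix.zero_apply, mul_zero,
      abs_zero]
    all_goals try positivity
    have hS : |(A₂₂ - A₂₁ * A₁₁⁻¹ * A₁₂) x y| ≤ μ ^ 2 * sval A₁₁ (Fintype.card κ) :=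
      calc |(A₂₂ - A₂₁ * A₁₁⁻¹ * A₁₂) x y| ≤ specNorm (A₂₂ - A₂₁ * A₁₁⁻¹ * A₁₂) :=
            abs_apply_le_specNorm _ x y
        _ ≤ μ * sval (fromBlocks A₁₁ A₁₂ A₂₁ A₂₂) (Fintype.card κ) :=
            h2.trans (mul_le_mul_of_nonneg_left (sval_succ_le _ hκ) hμ)
        _ ≤ μ ^ 2 * sval A₁₁ (Fintype.card κ) := by
            rw [sq, mul_assoc]
            exact mul_le_mul_of_nonneg_left h1 hμ
    calc |A₁₁⁻¹ j i * (A₂₂ - A₂₁ * A₁₁⁻¹ * A₁₂) x y|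
        ≤ |A₁₁⁻¹ j i| * (μ ^ 2 * sval A₁₁ (Fintype.card κ)) := by
          rw [abs_mul]
          exact mul_le_mul_of_nonneg_left hS (abs_nonneg _)
      _ = μ ^ 2 * (sval A₁₁ (Fintype.card κ) * |A₁₁⁻¹ j i|) := by ring
      _ ≤ μ ^ 2 := mul_le_of_le_one_right (sq_nonneg μ)
          (sval_card_mul_abs_inv_apply_le_one A₁₁ hA j i)
  rw [det_fromBlocks_submatrix_update_update _ _ _ _ hA, abs_mul, mul_comm]
  refine mul_le_mul_of_nonneg_right ?_ (abs_nonneg _)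
  calc _ ≤ |fromRows 1 (A₂₁ * A₁₁⁻¹) p i| * |fromCols 1 (A₁₁⁻¹ * A₁₂) j q| +
        |A₁₁⁻¹ j i * fromBlocks 0 0 0 (A₂₂ - A₂₁ * A₁₁⁻¹ * A₁₂) p q| := by
        rw [← abs_mul]
        exact abs_add_le _ _
    _ ≤ ν * ν + μ ^ 2 :=
        add_le_add (mul_le_mul hrow hcol (abs_nonneg _) (zero_le_one.trans hν)) hschur
    _ = ν ^ 2 + μ ^ 2 := by ring

theorem statement_11_general {k m' n' : ℕ}
    (A11 : Matrix (Fin k) (Fin k) ℝ) (A12 : Matrix (Fin k) (Fin n') ℝ)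
    (A21 : Matrix (Fin m') (Fin k) ℝ) (A22 : Matrix (Fin m') (Fin n') ℝ)
    (hinv : IsUnit A11.det)
    (μ ν : ℝ) (hμ : 1 ≤ μ) (hν : 1 ≤ ν)
    (h1 : sval (Matrix.fromBlocks A11 A12 A21 A22) k ≤ μ * sval A11 k)
    (h2 : specNorm (A22 - A21 * A11⁻¹ * A12) ≤
      μ * sval (Matrix.fromBlocks A11 A12 A21 A22) (k + 1))
    (h3a : ∀ i j, |(A21 * A11⁻¹) i j| ≤ ν)
    (h3b : ∀ i j, |(A11⁻¹ * A12) i j| ≤ ν) :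
    ∀ (r : Fin k → Fin k ⊕ Fin m') (c : Fin k → Fin k ⊕ Fin n'),
      DiffOne Sum.inl r → DiffOne Sum.inl c →
      vol ((Matrix.fromBlocks A11 A12 A21 A22).submatrix r c) ≤
        (ν ^ 2 + μ ^ 2) * vol A11 := by
  intro r c hr hc
  rw [vol_eq_abs_det, vol_eq_abs_det]
  rcases isEmpty_or_nonempty (Fin k) with hk | hk
  · simp only [det_isEmpty, abs_one, mul_one]
    nlinarith
  obtain ⟨i, p, σ, rfl⟩ := hr.exists_eq_update_comp_perm Sum.inl_injective
  obtain ⟨j, q, τ, rfl⟩ := hc.exists_eq_update_comp_perm Sum.inl_injective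
  rw [← submatrix_submatrix, abs_det_submatrix_equiv_equiv]
  exact abs_det_fromBlocks_submatrix_update_le A11 A12 A21 A22 hinv (by linarith) hν
    (by simpa using h1) (by simpa using h2) h3a h3b i j p q

theorem statement_11 {k m' n' : ℕ} (hm : 1 ≤ m') (hn : 1 ≤ n')
    (A11 : Matrix (Fin k) (Fin k) ℝ) (A12 : Matrix (Fin k) (Fin n') ℝ)
    (A21 : Matrix (Fin m') (Fin k) ℝ) (A22 : Matrix (Fin m') (Fin n') ℝ)
    (hinv : IsUnit A11.det)
    (μ ν : ℝ) (hμ : 1 ≤ μ) (hν : 1 ≤ ν)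
    (h1 : sval (Matrix.fromBlocks A11 A12 A21 A22) k ≤ μ * sval A11 k)
    (h2 : specNorm (A22 - A21 * A11⁻¹ * A12) ≤
      μ * sval (Matrix.fromBlocks A11 A12 A21 A22) (k + 1))
    (h3a : ∀ i j, |(A21 * A11⁻¹) i j| ≤ ν)
    (h3b : ∀ i j, |(A11⁻¹ * A12) i j| ≤ ν) :
    ∀ (r : Fin k → Fin k ⊕ Fin m') (c : Fin k → Fin k ⊕ Fin n'),
      DiffOne Sum.inl r → DiffOne Sum.inl c →
      vol ((Matrix.fromBlocks A11 A12 A21 A22).submatrix r c) ≤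
        (ν ^ 2 + μ ^ 2) * vol A11 :=
  statement_11_general A11 A12 A21 A22 hinv μ ν hμ hν h1 h2 h3a h3b
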